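/- arXiv:1506.04438 — 2 statements merged into one kernel-verified Lean document; each statement's English description precedes it below -/
import Mathlib

section
/- For any MUL-tree T on X for which the folding F(T) is defined, the unfolding U(F(T)) is isomorphic to T as MUL-trees on X. -/
/-! Basic framework: labelled rooted directed multigraphs, phylogenetic
networks, (pseudo) MUL-trees, unfolding, folding maps, etc. -/

structure Dgr (X : Type) : Type 1 where
  V : Type
  A : Type
  tl : A → V
  hd : A → V
  root : V
  lab : V → Option X

namespace Dgr

variable {X : Type}

/-- There is an arc from `u` to `v`. -/
def arcRel (G : Dgr X) (u v : G.V) : Prop := ∃ a : G.A, G.tl a = u ∧ G.hd a = v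

/-- `v` is reachable from `u` by a directed path (possibly trivial);
equivalently, `v` is below `u` or equal to it. -/
def Reaches (G : Dgr X) : G.V → G.V → Prop := Relation.ReflTransGen G.arcRel

noncomputable def indeg (G : Dgr X) (v : G.V) : ℕ := Nat.card {a : G.A // G.hd a = v}
noncomputable def outdeg (G : Dgr X) (v : G.V) : ℕ := Nat.card {a : G.A // G.tl a = v}

def IsLeaf (G : Dgr X) (v : G.V) : Prop := G.outdeg v = 0

def Acyclic (G : Dgr X) : Prop := ∀ v, ¬ Relation.TransGen G.arcRel v v

/-- A finite rooted DAG: acyclic, the root has in-degree zero and every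
vertex is reachable from the root. -/
def IsRootedDAG (G : Dgr X) : Prop :=
  Finite G.V ∧ Finite G.A ∧ G.Acyclic ∧ G.indeg G.root = 0 ∧ ∀ v, G.Reaches G.root v

/-- A tree vertex: in-degree one, out-degree zero (a leaf) or at least two. -/
def IsTreeVertex (G : Dgr X) (v : G.V) : Prop :=
  G.indeg v = 1 ∧ (G.outdeg v = 0 ∨ 2 ≤ G.outdeg v)

/-- A reticulation vertex: out-degree one and in-degree at least two. -/
def IsRetVertex (G : Dgr X) (v : G.V) : Prop := G.outdeg v = 1 ∧ 2 ≤ G.indeg v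

/-- An `X`-network: rooted DAG (multi-arcs allowed), root of out-degree ≥ 2,
every non-root vertex a tree vertex or a reticulation vertex, and the leaves
are labelled bijectively by `X`. -/
def IsXNetwork (G : Dgr X) : Prop :=
  G.IsRootedDAG ∧ 2 ≤ G.outdeg G.root ∧
  (∀ v, v ≠ G.root → G.IsTreeVertex v ∨ G.IsRetVertex v) ∧
  (∀ v, (∃ x, G.lab v = some x) ↔ G.IsLeaf v) ∧
  (∀ x : X, ∃! v, G.lab v = some x)

def NoMultiArcs (G : Dgr X) : Prop :=
  ∀ a b : G.A, G.tl a = G.tl b → G.hd a = G.hd b → a = b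

/-- A phylogenetic network on `X`: an `X`-network without multi-arcs. -/
def IsPhyloNetwork (G : Dgr X) : Prop := G.IsXNetwork ∧ G.NoMultiArcs

/-- A phylogenetic tree on `X`: a phylogenetic network with no reticulations. -/
def IsPhyloTree (G : Dgr X) : Prop := G.IsPhyloNetwork ∧ ∀ v, ¬ G.IsRetVertex v

/-- A pseudo MUL-tree on `X`: a finite rooted tree whose leaves are labelled
by elements of `X` (several leaves may share a label, every element of `X`
is used, and exactly the leaves are labelled). -/
def IsPMulTree (G : Dgr X) : Prop :=
  G.IsRootedDAG ∧ (∀ v, v ≠ G.root → G.indeg v = 1) ∧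
  (∀ v, (∃ x, G.lab v = some x) ↔ G.IsLeaf v) ∧
  (∀ x : X, ∃ v, G.lab v = some x)

/-- A MUL-tree: a pseudo MUL-tree with no in-degree-one out-degree-one vertex. -/
def IsMulTree (G : Dgr X) : Prop :=
  G.IsPMulTree ∧ ∀ v, ¬ (G.indeg v = 1 ∧ G.outdeg v = 1)

/-- Isomorphism of labelled rooted directed multigraphs. -/
def Iso (G H : Dgr X) : Prop :=
  ∃ (φ : G.V ≃ H.V) (ψ : G.A ≃ H.A),
    (∀ a, H.tl (ψ a) = φ (G.tl a)) ∧ (∀ a, H.hd (ψ a) = φ (G.hd a)) ∧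
    φ G.root = H.root ∧ (∀ v, H.lab (φ v) = G.lab v)

/-- The pendant subgraph rooted at `v` (everything below or equal to `v`). -/
def pendant (G : Dgr X) (v : G.V) : Dgr X where
  V := {w : G.V // G.Reaches v w}
  A := {a : G.A // G.Reaches v (G.tl a)}
  tl a := ⟨G.tl a.1, a.2⟩
  hd a := ⟨G.hd a.1, a.2.tail ⟨a.1, rfl, rfl⟩⟩
  root := ⟨v, Relation.ReflTransGen.refl⟩
  lab w := G.lab w.1

/-- Directed paths in `G` starting at the root, ending at the index vertex. -/
inductive RPath (G : Dgr X) : G.V → Type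
  | nil : RPath G G.root
  | cons {v : G.V} (p : RPath G v) (a : G.A) (h : G.tl a = v) : RPath G (G.hd a)

/-- The path-tree `U*(G)`: vertices are directed root-paths of `G`, arcs are
one-arc extensions, the label of a path is the label of its last vertex. -/
def Ustar (G : Dgr X) : Dgr X where
  V := Σ v : G.V, RPath G v
  A := Σ v : G.V, RPath G v × {a : G.A // G.tl a = v}
  tl x := ⟨x.1, x.2.1⟩
  hd x := ⟨G.hd x.2.2.1, RPath.cons x.2.1 x.2.2.1 x.2.2.2⟩
  root := ⟨G.root, RPath.nil⟩
  lab x := G.lab x.1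

/-- Vertices kept by the suppression operation (the root is always kept). -/
def Keep (G : Dgr X) (v : G.V) : Prop :=
  v = G.root ∨ ¬ (G.indeg v = 1 ∧ G.outdeg v = 1)

def startV (G : Dgr X) (l : List G.A) : G.V :=
  match l.head? with
  | some a => G.tl a
  | none => G.root

def endV (G : Dgr X) (l : List G.A) : G.V :=
  match l.getLast? with
  | some a => G.hd a
  | none => G.root

/-- `l` is a composable sequence of arcs. -/
def IsChain (G : Dgr X) (l : List G.A) : Prop :=
  ∀ p a b s, l = p ++ a :: b :: s → G.hd a = G.tl b

/-- An arc of the suppression: a nonempty directed path between kept vertices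
all of whose intermediate vertices are suppressed. -/
def IsSuppArc (G : Dgr X) (l : List G.A) : Prop :=
  l ≠ [] ∧ G.IsChain l ∧ G.Keep (G.startV l) ∧ G.Keep (G.endV l) ∧
  ∀ p a s, l = p ++ a :: s → s ≠ [] → ¬ G.Keep (G.hd a)

/-- Suppression of all in-degree-one out-degree-one vertices. -/
def suppress (G : Dgr X) : Dgr X where
  V := {v : G.V // G.Keep v}
  A := {l : List G.A // G.IsSuppArc l}
  tl l := ⟨G.startV l.1, l.2.2.2.1⟩
  hd l := ⟨G.endV l.1, l.2.2.2.2.1⟩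
  root := ⟨G.root, Or.inl rfl⟩
  lab v := G.lab v.1

/-- The unfolding `U(G)`: the path-tree with in-degree-one out-degree-one
vertices suppressed. -/
def U (G : Dgr X) : Dgr X := G.Ustar.suppress

/-- An `X`-morphism: maps on vertices and arcs commuting with heads and tails
and preserving the leaf-labelling by `X`. -/
structure Mor (G H : Dgr X) where
  fV : G.V → H.V
  fA : G.A → H.A
  tl_comm : ∀ a, H.tl (fA a) = fV (G.tl a)
  hd_comm : ∀ a, H.hd (fA a) = fV (G.hd a)
  lab_pres : ∀ v x, G.lab v = some x → H.lab (fV v) = some x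

def Mor.IsRooted {G H : Dgr X} (f : Mor G H) : Prop := f.fV G.root = H.root

/-- A folding map: a surjective `X`-morphism with the unique arc-lifting
property. -/
def Mor.IsFolding {G H : Dgr X} (f : Mor G H) : Prop :=
  Function.Surjective f.fV ∧ Function.Surjective f.fA ∧
  ∀ (a : H.A) (v : G.V), f.fV v = H.tl a →
    ∃! b : G.A, G.tl b = v ∧ f.fA b = a

/-- The canonical map `U*(G) → G` sending a root-path to its last vertex. -/
def fstar (G : Dgr X) : Mor G.Ustar G where
  fV x := x.1
  fA x := x.2.2.1
  tl_comm a := a.2.2.2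
  hd_comm _ := rfl
  lab_pres _ _ h := h

/-- `v` is an interior vertex of the arc-sequence `l`. -/
def IsInteriorOf (G : Dgr X) (l : List G.A) (v : G.V) : Prop :=
  ∃ p a s, l = p ++ a :: s ∧ s ≠ [] ∧ G.hd a = v

/-- `G'` is a subdivision of `G`. -/
def IsSubdivisionOf (G' G : Dgr X) : Prop :=
  ∃ (φ : G.V → G'.V) (ψ : G.A → List G'.A),
    Function.Injective φ ∧ φ G.root = G'.root ∧
    (∀ v, G'.lab (φ v) = G.lab v) ∧
    (∀ a, ψ a ≠ [] ∧ G'.IsChain (ψ a) ∧ G'.startV (ψ a) = φ (G.tl a) ∧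
      G'.endV (ψ a) = φ (G.hd a) ∧
      ∀ v, G'.IsInteriorOf (ψ a) v → v ∉ Set.range φ) ∧
    (∀ v' : G'.V, v' ∉ Set.range φ →
      G'.indeg v' = 1 ∧ G'.outdeg v' = 1 ∧ G'.lab v' = none) ∧
    (∀ a' : G'.A, ∃! a : G.A, a' ∈ ψ a)

/-- `H` is (isomorphic to) a subgraph of `G`. -/
def IsSubgraphOf (H G : Dgr X) : Prop :=
  ∃ (φ : H.V → G.V) (ψ : H.A → G.A),
    Function.Injective φ ∧ Function.Injective ψ ∧
    (∀ a, G.tl (ψ a) = φ (H.tl a)) ∧ (∀ a, G.hd (ψ a) = φ (H.hd a)) ∧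
    (∀ v, H.lab v = G.lab (φ v))

/-- `G` displays `T`: some subgraph of `G` is a subdivision of `T`. -/
def Displays (G T : Dgr X) : Prop :=
  ∃ H : Dgr X, IsSubgraphOf H G ∧ IsSubdivisionOf H T

/-- `T` is weakly displayed by `G`: `T` is displayed by the unfolding `U(G)`. -/
def WeaklyDisplays (G T : Dgr X) : Prop := Displays G.U T

/-- `N` is (isomorphic to) the folding `F(T)` of the MUL-tree `T`: `N` is an
`X`-network obtained as the quotient of a subdivision `T'` of `T` by the
relation identifying vertices with isomorphic pendant subtrees, the quotient
map being a folding map whose fibres are exactly the classes of that relation. -/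
def IsFoldingOf (N T : Dgr X) : Prop :=
  N.IsXNetwork ∧ ∃ T' : Dgr X, IsSubdivisionOf T' T ∧
    ∃ f : Mor T' N, f.IsFolding ∧
      ∀ u v : T'.V, f.fV u = f.fV v ↔ Iso (T'.pendant u) (T'.pendant v)

/-- `N` is stable: `F(U(N))` is isomorphic to `N`. -/
def Stable (N : Dgr X) : Prop :=
  ∃ N' : Dgr X, IsFoldingOf N' N.U ∧ Iso N' N

/-- `T'` is the guide tree `T†` of the folding operation applied to `T`:
a subdivision of `T` whose quotient by the isomorphic-pendant-subtree
relation is an `X`-network via a folding map. -/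
def IsDaggerOf (T' T : Dgr X) : Prop :=
  IsSubdivisionOf T' T ∧ ∃ (N : Dgr X) (f : Mor T' N), N.IsXNetwork ∧
    f.IsFolding ∧
    ∀ u v : T'.V, f.fV u = f.fV v ↔ Iso (T'.pendant u) (T'.pendant v)

/-- The child of every reticulation vertex is a tree vertex. -/
def Compressed (N : Dgr X) : Prop :=
  ∀ a : N.A, N.IsRetVertex (N.tl a) → N.IsTreeVertex (N.hd a)

/-- Every (non-leaf) tree vertex has out-degree two. -/
def SemiResolved (N : Dgr X) : Prop :=
  ∀ v, N.indeg v = 1 → N.outdeg v = 0 ∨ N.outdeg v = 2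

/-- Binary phylogenetic network. -/
def BinaryNet (N : Dgr X) : Prop :=
  N.outdeg N.root = 2 ∧ ∀ v, v ≠ N.root →
    (N.IsRetVertex v → N.indeg v = 2) ∧
    (N.indeg v = 1 → N.outdeg v = 0 ∨ N.outdeg v = 2)

/-- Binary tree: every vertex has out-degree zero or two. -/
def BinaryTree (T : Dgr X) : Prop := ∀ v, T.outdeg v = 0 ∨ T.outdeg v = 2

/-- The set of children of a vertex. -/
def children (N : Dgr X) (v : N.V) : Set N.V := {w | ∃ a, N.tl a = v ∧ N.hd a = w}

/-- Tree-sibling network: every reticulation vertex has a sibling that is a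
tree vertex. -/
def TreeSibling (N : Dgr X) : Prop :=
  ∀ v, N.IsRetVertex v → ∃ w, w ≠ v ∧ N.IsTreeVertex w ∧
    ∃ a b : N.A, N.tl a = N.tl b ∧ N.hd a = v ∧ N.hd b = w

/-- The final vertex in `N` of (the path underlying) a vertex of `U(N)`. -/
def endOf (N : Dgr X) (p : N.U.V) : N.V := p.1.1

/-- Identifiable pair of tree vertices. -/
def Identifiable (N : Dgr X) (v w : N.V) : Prop :=
  v ≠ w ∧ N.IsTreeVertex v ∧ N.IsTreeVertex w ∧
  ∃ p q : N.U.V, N.endOf p = v ∧ N.endOf q = w ∧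
    Iso (N.U.pendant p) (N.U.pendant q)

/-- Irreducible network: no identifiable pair of tree vertices. -/
def Irreducible (N : Dgr X) : Prop := ¬ ∃ v w, N.Identifiable v w

/-- The pendant subtree at `v` is inextendible: some other vertex carries an
isomorphic pendant subtree. -/
def Inextendible (T : Dgr X) (v : T.V) : Prop :=
  ∃ v', v' ≠ v ∧ Iso (T.pendant v) (T.pendant v')

/-- A reconciliation map between a tree `T` and a network `N`. -/
structure Recon (T N : Dgr X) where
  r : T.V → N.V
  P : T.A → List N.A
  tree_or_root : ∀ v, r v = N.root ∨ N.IsTreeVertex (r v)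
  leaf_fix : ∀ v x, T.lab v = some x → N.lab (r v) = some x
  chain : ∀ a, N.IsChain (P a)
  trivialP : ∀ a, P a = [] → r (T.tl a) = r (T.hd a)
  startP : ∀ a, P a ≠ [] → N.startV (P a) = r (T.tl a)
  endP : ∀ a, P a ≠ [] → N.endV (P a) = r (T.hd a)

/-- Locally separated reconciliation: for any two distinct arcs of `T` with
the same tail, both associated paths are nonempty and have distinct initial
arcs. -/
def Recon.LocSep {T N : Dgr X} (ρ : Recon T N) : Prop :=
  ∀ a b : T.A, a ≠ b → T.tl a = T.tl b →
    ρ.P a ≠ [] ∧ ρ.P b ≠ [] ∧ (ρ.P a).head? ≠ (ρ.P b).head?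

/-- The pendant subnetwork `N(u)`: restrict below `u` and suppress. -/
def Nsub (N : Dgr X) (u : N.V) : Dgr X := (N.pendant u).suppress

/-- The function `τ` of the dynamic program (as a proposition, `τ(v,u)=1`). -/
def tau (T N : Dgr X) (v : T.V) (u : N.V) : Prop :=
  (T.IsLeaf v → ∀ x, T.lab v = some x →
     ∃ u' : N.V, N.lab u' = some x ∧ N.Reaches u u') ∧
  (¬ T.IsLeaf v → ∃ u' : N.V, (u' = N.root ∨ N.IsTreeVertex u') ∧
     N.Reaches u u' ∧ ∃ ρ : Recon (T.pendant v) (N.Nsub u'), ρ.LocSep)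

/-- The result of `HangLeaves(v)` on the network `N` (new leaves are labelled
by the two new elements of `X ⊕ Fin 2`); vertices `inr 0, 1, 2, 3, 4` are
`x_v, x'_v, p_v, q_v, ρ_v` respectively. -/
def HangN (N : Dgr X) (v : N.V) : Dgr (X ⊕ Fin 2) where
  V := N.V ⊕ Fin 5
  A := N.A ⊕ Fin 6
  tl := Sum.elim (fun a => Sum.inl (N.tl a))
    ![Sum.inr 4, Sum.inr 4, Sum.inr 2, Sum.inl v, Sum.inr 2, Sum.inr 3]
  hd := Sum.elim (fun a => Sum.inl (N.hd a))
    ![Sum.inl N.root, Sum.inr 2, Sum.inr 3, Sum.inr 3, Sum.inr 1, Sum.inr 0]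
  root := Sum.inr 4
  lab := Sum.elim (fun w => (N.lab w).map Sum.inl)
    ![some (Sum.inr 0), some (Sum.inr 1), none, none, none]

/-- The result of `HangLeaves` on the tree `T`; vertices `inr 0, 1, 2, 3` are
`x_v, x'_v, p_v, ρ_v` respectively. -/
def HangT (T : Dgr X) : Dgr (X ⊕ Fin 2) where
  V := T.V ⊕ Fin 4
  A := T.A ⊕ Fin 4
  tl := Sum.elim (fun a => Sum.inl (T.tl a))
    ![Sum.inr 3, Sum.inr 3, Sum.inr 2, Sum.inr 2]
  hd := Sum.elim (fun a => Sum.inl (T.hd a))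
    ![Sum.inl T.root, Sum.inr 2, Sum.inr 0, Sum.inr 1]
  root := Sum.inr 3
  lab := Sum.elim (fun w => (T.lab w).map Sum.inl)
    ![some (Sum.inr 0), some (Sum.inr 1), none, none]

end Dgr

/-!
A subdivision `T'` of `T` is a rooted tree, and the folding map `f : T' → N` lifts every arc of
`N` uniquely at every preimage of its tail. Hence `f` maps the root paths of `T'` bijectively onto
those of `N`, i.e. `U*(N) ≅ U*(T') ≅ T'`. Suppressing the subdivision vertices of `T'` then gives
back `T`, because `T` has no vertex of in-degree and out-degree one.
-/

namespace Dgr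

variable {X : Type}

theorem comm_symm_of_comm {α β γ δ : Type} (φ : γ ≃ δ) (ψ : α ≃ β) {f : α → γ} {g : β → δ}
    (h : ∀ a, g (ψ a) = φ (f a)) (b : β) : f (ψ.symm b) = φ.symm (g b) :=
  (φ.symm_apply_eq.mpr (by rw [← h, ψ.apply_symm_apply])).symm

theorem Iso.symm {G H : Dgr X} (h : Iso G H) : Iso H G := by
  obtain ⟨φ, ψ, htl, hhd, hr, hlab⟩ := h
  exact ⟨φ.symm, ψ.symm, comm_symm_of_comm φ ψ htl, comm_symm_of_comm φ ψ hhd,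
    φ.symm_apply_eq.mpr hr.symm, fun v => by rw [← hlab, φ.apply_symm_apply]⟩

theorem Iso.trans {G H K : Dgr X} (h₁ : Iso G H) (h₂ : Iso H K) : Iso G K := by
  obtain ⟨φ₁, ψ₁, htl₁, hhd₁, hr₁, hlab₁⟩ := h₁
  obtain ⟨φ₂, ψ₂, htl₂, hhd₂, hr₂, hlab₂⟩ := h₂
  refine ⟨φ₁.trans φ₂, ψ₁.trans ψ₂, fun a => ?_, fun a => ?_, ?_, fun v => ?_⟩ <;>
    simp [htl₁, htl₂, hhd₁, hhd₂, hr₁, hr₂, hlab₁, hlab₂]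

section Degrees

variable {G : Dgr X} {v : G.V}

theorem hd_ne_of_indeg_eq_zero [Finite G.A] (h : G.indeg v = 0) (a : G.A) : G.hd a ≠ v :=
  fun ha => (Finite.card_eq_zero_iff.mp h).elim ⟨a, ha⟩

theorem tl_ne_of_outdeg_eq_zero [Finite G.A] (h : G.outdeg v = 0) (a : G.A) : G.tl a ≠ v :=
  fun ha => (Finite.card_eq_zero_iff.mp h).elim ⟨a, ha⟩

theorem eq_of_hd_eq_of_indeg_eq_one (h : G.indeg v = 1) {a b : G.A} (ha : G.hd a = v)
    (hb : G.hd b = v) : a = b :=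
  have := (Nat.card_eq_one_iff_unique.mp h).1
  congrArg Subtype.val (Subsingleton.elim (⟨a, ha⟩ : {a // G.hd a = v}) ⟨b, hb⟩)

theorem eq_of_tl_eq_of_outdeg_eq_one (h : G.outdeg v = 1) {a b : G.A} (ha : G.tl a = v)
    (hb : G.tl b = v) : a = b :=
  have := (Nat.card_eq_one_iff_unique.mp h).1
  congrArg Subtype.val (Subsingleton.elim (⟨a, ha⟩ : {a // G.tl a = v}) ⟨b, hb⟩)

theorem exists_hd_eq_of_indeg_eq_one (h : G.indeg v = 1) : ∃ a, G.hd a = v :=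
  let ⟨⟨a, ha⟩⟩ := (Nat.card_eq_one_iff_unique.mp h).2
  ⟨a, ha⟩

end Degrees

structure IsArborescence (G : Dgr X) : Prop where
  hd_ne_root : ∀ a, G.hd a ≠ G.root
  hd_injective : Function.Injective G.hd
  reaches : ∀ v, G.Reaches G.root v

theorem IsPMulTree.isArborescence {T : Dgr X} (hT : T.IsPMulTree) : T.IsArborescence := by
  obtain ⟨⟨-, hA, -, hroot, hreach⟩, hin, -, -⟩ := hT
  have hd_ne_root := hd_ne_of_indeg_eq_zero hroot
  exact ⟨hd_ne_root,
    fun a _ h => eq_of_hd_eq_of_indeg_eq_one (hin _ (hd_ne_root a)) rfl h.symm, hreach⟩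

theorem IsArborescence.exists_hd_eq {G : Dgr X} (hG : G.IsArborescence) {v : G.V}
    (hv : v ≠ G.root) : ∃ a, G.hd a = v := by
  rcases (hG.reaches v).cases_tail with rfl | ⟨_, -, a, -, ha⟩
  · exact absurd rfl hv
  · exact ⟨a, ha⟩

namespace RPath

variable {G H : Dgr X}

def cast : ∀ {u v : G.V}, u = v → G.RPath u → G.RPath v
  | _, _, rfl, p => p

theorem sigma_cast {u v : G.V} (h : u = v) (p : G.RPath u) :
    (⟨v, cast h p⟩ : Σ w, G.RPath w) = ⟨u, p⟩ := by
  subst h; rfl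

def unsnoc : (Σ v, G.RPath v) → Option (G.A × Σ v, G.RPath v)
  | ⟨_, nil⟩ => none
  | ⟨_, cons p a _⟩ => some (a, ⟨_, p⟩)

theorem sigma_nil_ne_cons {u : G.V} (p : G.RPath u) (a : G.A) (ha : G.tl a = u) :
    (⟨G.root, nil⟩ : Σ w, G.RPath w) ≠ ⟨G.hd a, cons p a ha⟩ :=
  fun h => by simpa [unsnoc] using congrArg unsnoc h

theorem sigma_cons_inj {u w : G.V} {p : G.RPath u} {q : G.RPath w} {a b : G.A}
    {ha : G.tl a = u} {hb : G.tl b = w}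
    (h : (⟨G.hd a, cons p a ha⟩ : Σ v, G.RPath v) = ⟨G.hd b, cons q b hb⟩) :
    a = b ∧ (⟨u, p⟩ : Σ v, G.RPath v) = ⟨w, q⟩ := by
  simpa [unsnoc] using congrArg unsnoc h

theorem sigma_cons_congr {u w : G.V} {p : G.RPath u} {q : G.RPath w}
    (h : (⟨u, p⟩ : Σ v, G.RPath v) = ⟨w, q⟩) {a : G.A} (hu : G.tl a = u) (hw : G.tl a = w) :
    (⟨G.hd a, cons p a hu⟩ : Σ v, G.RPath v) = ⟨G.hd a, cons q a hw⟩ := by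
  cases h; rfl

theorem nonempty_of_reaches {v : G.V} (h : G.Reaches G.root v) : Nonempty (G.RPath v) := by
  induction h with
  | refl => exact ⟨nil⟩
  | tail _ harc ih =>
    obtain ⟨a, rfl, rfl⟩ := harc
    obtain ⟨p⟩ := ih
    exact ⟨cons p a rfl⟩

def map (f : Mor G H) (hr : f.IsRooted) : ∀ {v : G.V}, G.RPath v → H.RPath (f.fV v)
  | _, nil => cast (Eq.symm hr) nil
  | _, cons p a h => cast (f.hd_comm a) (cons (map f hr p) (f.fA a) (by rw [f.tl_comm, h]))

variable (f : Mor G H) (hr : f.IsRooted)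

theorem sigma_map_nil : (⟨f.fV G.root, nil.map f hr⟩ : Σ u, H.RPath u) = ⟨H.root, nil⟩ :=
  sigma_cast _ _

theorem sigma_map_cons {u : G.V} (p : G.RPath u) (a : G.A) (ha : G.tl a = u) :
    (⟨f.fV (G.hd a), (cons p a ha).map f hr⟩ : Σ u, H.RPath u)
      = ⟨H.hd (f.fA a), cons (p.map f hr) (f.fA a) (by rw [f.tl_comm, ha])⟩ :=
  sigma_cast _ _

end RPath

theorem IsArborescence.bijective_rpath_fst {G : Dgr X} (hG : G.IsArborescence) :
    Function.Bijective (Sigma.fst : (Σ v, G.RPath v) → G.V) := by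
  refine ⟨?_, fun v => ⟨⟨v, (RPath.nonempty_of_reaches (hG.reaches v)).some⟩, rfl⟩⟩
  rintro ⟨v, p⟩ ⟨w, q⟩ (h : v = w)
  induction p generalizing w with
  | nil =>
    cases q with
    | nil => rfl
    | cons q b hb => exact absurd h.symm (hG.hd_ne_root b)
  | cons p a ha ih =>
    cases q with
    | nil => exact absurd h (hG.hd_ne_root a)
    | cons q b hb =>
      obtain rfl := hG.hd_injective h
      exact RPath.sigma_cons_congr (ih _ q (ha.symm.trans hb)) ha hb

theorem ustar_arc_ext {G : Dgr X} {x y : G.Ustar.A} (htl : G.Ustar.tl x = G.Ustar.tl y)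
    (harc : x.2.2.1 = y.2.2.1) : x = y := by
  obtain ⟨v, p, a, ha⟩ := x
  obtain ⟨w, q, b, hb⟩ := y
  cases htl
  cases harc
  rfl

theorem Mor.iso_of_bijective {G H : Dgr X} (f : Mor G H) (hV : Function.Bijective f.fV)
    (hA : Function.Bijective f.fA) (hr : f.IsRooted) (hlab : ∀ v, H.lab (f.fV v) = G.lab v) :
    Iso G H :=
  ⟨.ofBijective _ hV, .ofBijective _ hA, f.tl_comm, f.hd_comm, hr, hlab⟩

theorem IsArborescence.iso_ustar {G : Dgr X} (hG : G.IsArborescence) : Iso G.Ustar G := by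
  have hV := hG.bijective_rpath_fst
  refine (fstar G).iso_of_bijective hV ⟨fun x y h => ustar_arc_ext (hV.1 ?_) h, fun a => ?_⟩
    rfl fun _ => rfl
  · exact x.2.2.2.symm.trans ((congrArg G.tl h).trans y.2.2.2)
  · exact ⟨⟨G.tl a, (RPath.nonempty_of_reaches (hG.reaches _)).some, a, rfl⟩, rfl⟩

def Mor.HasUniqueLifting {G H : Dgr X} (f : Mor G H) : Prop :=
  ∀ (c : H.A) (v : G.V), f.fV v = H.tl c → ∃! b : G.A, G.tl b = v ∧ f.fA b = c

theorem Mor.HasUniqueLifting.eq_of_tl_eq {G H : Dgr X} {f : Mor G H} (hf : f.HasUniqueLifting)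
    {a b : G.A} (htl : G.tl a = G.tl b) (hfa : f.fA a = f.fA b) : a = b :=
  (hf (f.fA a) (G.tl a) (f.tl_comm a).symm).unique ⟨rfl, rfl⟩ ⟨htl.symm, hfa.symm⟩

def Mor.ustar {G H : Dgr X} (f : Mor G H) (hr : f.IsRooted) : Mor G.Ustar H.Ustar where
  fV x := ⟨f.fV x.1, x.2.map f hr⟩
  fA x := ⟨f.fV x.1, x.2.1.map f hr, f.fA x.2.2.1, by rw [f.tl_comm, x.2.2.2]⟩
  tl_comm _ := rfl
  hd_comm x := (RPath.sigma_map_cons f hr _ _ _).symm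
  lab_pres x _ h := f.lab_pres x.1 _ h

namespace Mor.HasUniqueLifting

variable {G H : Dgr X} {f : Mor G H} (hf : f.HasUniqueLifting) (hr : f.IsRooted)
include hf hr

theorem ustar_fV_injective : Function.Injective (f.ustar hr).fV := by
  rintro ⟨v, p⟩ ⟨w, q⟩ (h : (⟨_, p.map f hr⟩ : Σ u, H.RPath u) = ⟨_, q.map f hr⟩)
  induction p generalizing w with
  | nil =>
    cases q with
    | nil => rfl
    | cons q b hb =>
      exact absurd ((RPath.sigma_map_nil f hr).symm.trans (h.trans (RPath.sigma_map_cons ..)))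
        (RPath.sigma_nil_ne_cons _ _ _)
  | cons p a ha ih =>
    cases q with
    | nil =>
      exact absurd ((RPath.sigma_map_nil f hr).symm.trans
        (h.symm.trans (RPath.sigma_map_cons ..))) (RPath.sigma_nil_ne_cons _ _ _)
    | cons q b hb =>
      obtain ⟨hab, hpq⟩ := RPath.sigma_cons_inj
        ((RPath.sigma_map_cons ..).symm.trans (h.trans (RPath.sigma_map_cons ..)))
      have hpq := ih _ q hpq
      obtain rfl := hf.eq_of_tl_eq (ha.trans ((congrArg Sigma.fst hpq).trans hb.symm)) hab
      exact RPath.sigma_cons_congr hpq ha hb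

theorem ustar_fV_surjective : Function.Surjective (f.ustar hr).fV := by
  rintro ⟨u, q⟩
  induction q with
  | nil => exact ⟨⟨G.root, .nil⟩, RPath.sigma_map_nil f hr⟩
  | cons q c hc ih =>
    obtain ⟨⟨v, p⟩, hx⟩ := ih
    obtain ⟨b, hb, rfl⟩ := (hf c v ((congrArg Sigma.fst hx).trans hc.symm)).exists
    exact ⟨⟨G.hd b, .cons p b hb⟩,
      (RPath.sigma_map_cons f hr p b hb).trans (RPath.sigma_cons_congr hx _ hc)⟩

theorem ustar_fA_bijective : Function.Bijective (f.ustar hr).fA := by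
  refine ⟨fun x y h => ?_, fun y => ?_⟩
  · have htl : G.Ustar.tl x = G.Ustar.tl y := hf.ustar_fV_injective hr
      (((f.ustar hr).tl_comm x).symm.trans ((congrArg _ h).trans ((f.ustar hr).tl_comm y)))
    refine ustar_arc_ext htl (hf.eq_of_tl_eq ?_ (congrArg (·.2.2.1) h))
    exact x.2.2.2.trans ((congrArg Sigma.fst htl).trans y.2.2.2.symm)
  · obtain ⟨x, hx⟩ := hf.ustar_fV_surjective hr (H.Ustar.tl y)
    obtain ⟨b, hb, hfb⟩ := (hf y.2.2.1 x.1 ((congrArg Sigma.fst hx).trans y.2.2.2.symm)).exists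
    exact ⟨⟨x.1, x.2, b, hb⟩, ustar_arc_ext hx hfb⟩

theorem iso_ustar (hlab : ∀ v, H.lab (f.fV v) = G.lab v) : Iso G.Ustar H.Ustar :=
  (f.ustar hr).iso_of_bijective ⟨hf.ustar_fV_injective hr, hf.ustar_fV_surjective hr⟩
    (hf.ustar_fA_bijective hr) (RPath.sigma_map_nil f hr) fun x => hlab x.1

end Mor.HasUniqueLifting

theorem Mor.isRooted_of_surjective {G H : Dgr X} [Finite H.A] (f : Mor G H)
    (hG : G.IsArborescence) (hH : H.indeg H.root = 0) (hV : Function.Surjective f.fV) :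
    f.IsRooted := by
  obtain ⟨v, hv⟩ := hV H.root
  by_cases hroot : v = G.root
  · subst hroot; exact hv
  · obtain ⟨a, rfl⟩ := hG.exists_hd_eq hroot
    exact absurd ((f.hd_comm a).trans hv) (hd_ne_of_indeg_eq_zero hH _)

theorem Mor.lab_eq {G H : Dgr X} [Finite H.A] (f : Mor G H)
    (hG : ∀ v, G.IsLeaf v → ∃ x, G.lab v = some x)
    (hH : ∀ u, (∃ x, H.lab u = some x) → H.IsLeaf u) (v : G.V) :
    H.lab (f.fV v) = G.lab v := by
  rcases hv : G.lab v with _ | x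
  · by_contra hu
    obtain ⟨x, hx⟩ := Option.ne_none_iff_exists'.mp hu
    obtain ⟨⟨a, ha⟩⟩ := (Nat.card_ne_zero.mp fun h0 => by simpa [hv] using hG v h0).1
    exact tl_ne_of_outdeg_eq_zero (hH _ ⟨x, hx⟩) (f.fA a) (by rw [f.tl_comm, ha])
  · exact f.lab_pres v x hv

section Chains

variable {G : Dgr X}

theorem IsChain.tail {c : G.A} {l : List G.A} (h : G.IsChain (c :: l)) : G.IsChain l :=
  fun p a b s hl => h (c :: p) a b s (by rw [hl]; rfl)

theorem startV_cons (c : G.A) (l : List G.A) : G.startV (c :: l) = G.tl c := rfl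

theorem endV_cons (c : G.A) {l : List G.A} (h : l ≠ []) : G.endV (c :: l) = G.endV l := by
  obtain ⟨d, t, rfl⟩ := List.exists_cons_of_ne_nil h
  simp [endV, List.getLast?_cons_cons]

theorem endV_concat (l : List G.A) (a : G.A) : G.endV (l ++ [a]) = G.hd a := by
  simp [endV]

theorem startV_eq_of_head? {l : List G.A} {a : G.A} (h : l.head? = some a) :
    G.startV l = G.tl a := by
  simp [startV, h]

theorem endV_eq_of_getLast? {l : List G.A} {a : G.A} (h : l.getLast? = some a) :
    G.endV l = G.hd a := by
  simp [endV, h]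

theorem IsChain.reaches_hd : ∀ {l : List G.A}, G.IsChain l → ∀ a ∈ l,
    G.Reaches (G.startV l) (G.hd a)
  | [], _, _, h => absurd h List.not_mem_nil
  | c :: t, hch, a, h => by
    rcases List.mem_cons.mp h with rfl | h
    · exact .single ⟨a, rfl, rfl⟩
    · obtain ⟨d, t', rfl⟩ := List.exists_cons_of_ne_nil (List.ne_nil_of_mem h)
      have hcd : G.hd c = G.tl d := hch [] c d t' rfl
      exact .head ⟨c, rfl, hcd⟩ (hch.tail.reaches_hd a h)

theorem IsChain.reaches_endV {l : List G.A} (hch : G.IsChain l) (h : l ≠ []) :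
    G.Reaches (G.startV l) (G.endV l) := by
  rw [endV_eq_of_getLast? (List.getLast?_eq_some_getLast h)]
  exact hch.reaches_hd _ (List.getLast_mem h)

def InteriorSuppressed (G : Dgr X) (l : List G.A) : Prop :=
  ∀ p a s, l = p ++ a :: s → s ≠ [] → ¬ G.Keep (G.hd a)

theorem InteriorSuppressed.tail {c : G.A} {l : List G.A}
    (h : G.InteriorSuppressed (c :: l)) : G.InteriorSuppressed l :=
  fun p a s hl hs => h (c :: p) a s (by rw [hl]; rfl) hs

theorem eq_of_head?_eq
    (hout : ∀ w, ¬ G.Keep w → ∀ d e : G.A, G.tl d = w → G.tl e = w → d = e) :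
    ∀ {l m : List G.A}, l ≠ [] → m ≠ [] → l.head? = m.head? →
      G.IsChain l → G.IsChain m → G.InteriorSuppressed l → G.InteriorSuppressed m →
      G.Keep (G.endV l) → G.Keep (G.endV m) → l = m
  | [], _, hl, _, _, _, _, _, _, _, _ => absurd rfl hl
  | _, [], _, hm, _, _, _, _, _, _, _ => absurd rfl hm
  | c :: l, c' :: m, _, _, hhead, hcl, hcm, hil, him, hkl, hkm => by
    obtain rfl : c = c' := by simpa using hhead
    match l, m with
    | [], [] => rfl
    | [], e :: m => exact absurd hkl (him [] c (e :: m) rfl (List.cons_ne_nil _ _))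
    | d :: l, [] => exact absurd hkm (hil [] c (d :: l) rfl (List.cons_ne_nil _ _))
    | d :: l, e :: m =>
      obtain rfl : d = e := hout _ (hil [] c (d :: l) rfl (List.cons_ne_nil _ _)) d e
        (hcl [] c d l rfl).symm (hcm [] c e m rfl).symm
      rw [eq_of_head?_eq (l := d :: l) (m := d :: m) hout (List.cons_ne_nil _ _)
        (List.cons_ne_nil _ _) rfl hcl.tail hcm.tail
        hil.tail him.tail (by rwa [endV_cons c (List.cons_ne_nil _ _)] at hkl)
        (by rwa [endV_cons c (List.cons_ne_nil _ _)] at hkm)]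

end Chains

section Transfer

variable {G H : Dgr X} (φ : G.V ≃ H.V) (ψ : G.A ≃ H.A)
  (htl : ∀ a, H.tl (ψ a) = φ (G.tl a)) (hhd : ∀ a, H.hd (ψ a) = φ (G.hd a))
  (hr : φ G.root = H.root)

theorem eq_append_cons_of_map_eq {α β : Type} (e : α ≃ β) {l : List α} {p : List β} {x : β}
    {s : List β} (h : l.map e = p ++ x :: s) :
    l = p.map e.symm ++ e.symm x :: s.map e.symm := by
  simpa [List.map_map] using congrArg (List.map e.symm) h

include htl hr in
theorem startV_map (l : List G.A) : H.startV (l.map ψ) = φ (G.startV l) := by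
  cases l with
  | nil => exact hr.symm
  | cons c t => exact htl c

include hhd hr in
theorem endV_map (l : List G.A) : H.endV (l.map ψ) = φ (G.endV l) := by
  induction l using List.reverseRecOn with
  | nil => exact hr.symm
  | append_singleton t a _ =>
    rw [List.map_append, List.map_singleton, endV_concat, endV_concat, hhd]

include htl hhd in
theorem IsChain.map {l : List G.A} (hl : G.IsChain l) : H.IsChain (l.map ψ) := by
  intro p a b s h
  have h' := hl _ _ _ _ (eq_append_cons_of_map_eq ψ h)
  rw [← ψ.apply_symm_apply a, ← ψ.apply_symm_apply b, hhd, htl, h']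

include htl hhd hr in
theorem keep_iff_keep_apply (v : G.V) : G.Keep v ↔ H.Keep (φ v) := by
  have hin : H.indeg (φ v) = G.indeg v := (Nat.card_congr (ψ.subtypeEquiv fun a => by
    rw [hhd, φ.apply_eq_iff_eq])).symm
  have hout : H.outdeg (φ v) = G.outdeg v := (Nat.card_congr (ψ.subtypeEquiv fun a => by
    rw [htl, φ.apply_eq_iff_eq])).symm
  rw [Keep, Keep, hin, hout, ← hr, φ.apply_eq_iff_eq]

include htl hhd hr in
theorem IsSuppArc.map {l : List G.A} (h : G.IsSuppArc l) : H.IsSuppArc (l.map ψ) := by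
  obtain ⟨hne, hch, hks, hke, hint⟩ := h
  have hkeep := keep_iff_keep_apply φ ψ htl hhd hr
  refine ⟨by simpa using hne, hch.map φ ψ htl hhd, ?_, ?_, fun p a s h hs hk => ?_⟩
  · rw [startV_map φ ψ htl hr]; exact (hkeep _).mp hks
  · rw [endV_map φ ψ hhd hr]; exact (hkeep _).mp hke
  · refine hint _ _ _ (eq_append_cons_of_map_eq ψ h) (by simpa using hs) ((hkeep _).mpr ?_)
    rwa [← hhd, ψ.apply_symm_apply]

end Transfer

theorem Iso.suppress {G H : Dgr X} (h : Iso G H) : Iso G.suppress H.suppress := by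
  obtain ⟨φ, ψ, htl, hhd, hr, hlab⟩ := h
  have hiff (l : List G.A) : G.IsSuppArc l ↔ H.IsSuppArc (l.map ψ) :=
    ⟨IsSuppArc.map φ ψ htl hhd hr, fun hl => by
      simpa [List.map_map] using hl.map φ.symm ψ.symm (comm_symm_of_comm φ ψ htl)
        (comm_symm_of_comm φ ψ hhd) (φ.symm_apply_eq.mpr hr.symm)⟩
  exact ⟨φ.subtypeEquiv (keep_iff_keep_apply φ ψ htl hhd hr),
    (Equiv.listEquivOfEquiv ψ).subtypeEquiv hiff, fun l => Subtype.ext (startV_map φ ψ htl hr l.1),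
    fun l => Subtype.ext (endV_map φ ψ hhd hr l.1), Subtype.ext hr, fun v => hlab v.1⟩

structure Subdivision (T' T : Dgr X) where
  φ : T.V → T'.V
  ψ : T.A → List T'.A
  φ_injective : Function.Injective φ
  φ_root : φ T.root = T'.root
  lab_φ : ∀ v, T'.lab (φ v) = T.lab v
  ψ_ne_nil : ∀ a, ψ a ≠ []
  isChain_ψ : ∀ a, T'.IsChain (ψ a)
  startV_ψ : ∀ a, T'.startV (ψ a) = φ (T.tl a)
  endV_ψ : ∀ a, T'.endV (ψ a) = φ (T.hd a)
  not_mem_range_of_isInteriorOf : ∀ a v, T'.IsInteriorOf (ψ a) v → v ∉ Set.range φ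
  of_not_mem_range : ∀ v', v' ∉ Set.range φ →
    T'.indeg v' = 1 ∧ T'.outdeg v' = 1 ∧ T'.lab v' = none
  existsUnique_mem_ψ : ∀ a', ∃! a, a' ∈ ψ a

theorem IsSubdivisionOf.nonempty_subdivision {T' T : Dgr X} (h : IsSubdivisionOf T' T) :
    Nonempty (Subdivision T' T) := by
  obtain ⟨φ, ψ, h1, h2, h3, h4, h5, h6⟩ := h
  exact ⟨⟨φ, ψ, h1, h2, h3, fun a => (h4 a).1, fun a => (h4 a).2.1, fun a => (h4 a).2.2.1,
    fun a => (h4 a).2.2.2.1, fun a => (h4 a).2.2.2.2, h5, h6⟩⟩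

namespace Subdivision

variable {T' T : Dgr X} (D : Subdivision T' T)
include D

theorem eq_of_mem_ψ {a b : T.A} {a' : T'.A} (ha : a' ∈ D.ψ a) (hb : a' ∈ D.ψ b) : a = b :=
  (D.existsUnique_mem_ψ a').unique ha hb

theorem ψ_injective : Function.Injective D.ψ := fun a b h =>
  D.eq_of_mem_ψ (List.head_mem (D.ψ_ne_nil a)) (by rw [← h]; exact List.head_mem _)

theorem head?_eq_or_tl_not_mem_range {a : T.A} {a' : T'.A} (h : a' ∈ D.ψ a) :
    (D.ψ a).head? = some a' ∨ T'.tl a' ∉ Set.range D.φ := by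
  obtain ⟨p, s, hdec⟩ := List.append_of_mem h
  rcases List.eq_nil_or_concat p with rfl | ⟨p, b, rfl⟩
  · simp [hdec]
  · right
    rw [← D.isChain_ψ a p b a' s (by simp [hdec])]
    exact D.not_mem_range_of_isInteriorOf a _
      ⟨p, b, a' :: s, by simp [hdec], List.cons_ne_nil _ _, rfl⟩

theorem getLast?_eq_or_hd_not_mem_range {a : T.A} {a' : T'.A} (h : a' ∈ D.ψ a) :
    (D.ψ a).getLast? = some a' ∨ T'.hd a' ∉ Set.range D.φ := by
  obtain ⟨p, s, hdec⟩ := List.append_of_mem h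
  rcases s with _ | ⟨e, s⟩
  · simp [hdec]
  · exact .inr <|
      D.not_mem_range_of_isInteriorOf a _ ⟨p, a', e :: s, hdec, List.cons_ne_nil _ _, rfl⟩

noncomputable def inArcEquiv (v : T.V) :
    {a : T.A // T.hd a = v} ≃ {a' : T'.A // T'.hd a' = D.φ v} := by
  refine .ofBijective (fun a => ⟨(D.ψ a).getLast (D.ψ_ne_nil a), ?_⟩) ⟨fun a b h => ?_, ?_⟩
  · rw [← endV_eq_of_getLast? (List.getLast?_eq_some_getLast _), D.endV_ψ, a.2]
  · refine Subtype.ext (D.eq_of_mem_ψ (List.getLast_mem (D.ψ_ne_nil a.1)) ?_)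
    have h : (D.ψ a).getLast _ = (D.ψ b).getLast _ := congrArg Subtype.val h
    exact h ▸ List.getLast_mem _
  · rintro ⟨a', ha'⟩
    obtain ⟨a, ha, -⟩ := D.existsUnique_mem_ψ a'
    rcases D.getLast?_eq_or_hd_not_mem_range ha with hlast | hnot
    · have hv : T.hd a = v := D.φ_injective <| by rw [← D.endV_ψ, endV_eq_of_getLast? hlast, ha']
      refine ⟨⟨a, hv⟩, Subtype.ext ?_⟩
      simpa [List.getLast?_eq_some_getLast (D.ψ_ne_nil a)] using hlast
    · exact absurd ⟨v, ha'.symm⟩ hnot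

noncomputable def outArcEquiv (v : T.V) :
    {a : T.A // T.tl a = v} ≃ {a' : T'.A // T'.tl a' = D.φ v} := by
  refine .ofBijective (fun a => ⟨(D.ψ a).head (D.ψ_ne_nil a), ?_⟩) ⟨fun a b h => ?_, ?_⟩
  · rw [← startV_eq_of_head? (List.head?_eq_some_head _), D.startV_ψ, a.2]
  · refine Subtype.ext (D.eq_of_mem_ψ (List.head_mem (D.ψ_ne_nil a.1)) ?_)
    have h : (D.ψ a).head _ = (D.ψ b).head _ := congrArg Subtype.val h
    exact h ▸ List.head_mem _
  · rintro ⟨a', ha'⟩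
    obtain ⟨a, ha, -⟩ := D.existsUnique_mem_ψ a'
    rcases D.head?_eq_or_tl_not_mem_range ha with hhead | hnot
    · have hv : T.tl a = v := D.φ_injective <| by
        rw [← D.startV_ψ, startV_eq_of_head? hhead, ha']
      refine ⟨⟨a, hv⟩, Subtype.ext ?_⟩
      simpa [List.head?_eq_some_head (D.ψ_ne_nil a)] using hhead
    · exact absurd ⟨v, ha'.symm⟩ hnot

theorem indeg_φ (v : T.V) : T'.indeg (D.φ v) = T.indeg v :=
  (Nat.card_congr (D.inArcEquiv v)).symm

theorem outdeg_φ (v : T.V) : T'.outdeg (D.φ v) = T.outdeg v :=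
  (Nat.card_congr (D.outArcEquiv v)).symm

section Suppress

variable (hnd : ∀ v, ¬ (T.indeg v = 1 ∧ T.outdeg v = 1))
include hnd

theorem keep_iff_mem_range (w : T'.V) : T'.Keep w ↔ w ∈ Set.range D.φ := by
  refine ⟨?_, fun ⟨v, hv⟩ => .inr (hv ▸ D.indeg_φ v ▸ D.outdeg_φ v ▸ hnd v)⟩
  rintro (rfl | hw)
  · exact ⟨T.root, D.φ_root⟩
  · by_contra hnot
    exact hw ⟨(D.of_not_mem_range w hnot).1, (D.of_not_mem_range w hnot).2.1⟩

theorem interiorSuppressed_ψ (a : T.A) : T'.InteriorSuppressed (D.ψ a) :=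
  fun p b s h hs hk => D.not_mem_range_of_isInteriorOf a _ ⟨p, b, s, h, hs, rfl⟩
    ((D.keep_iff_mem_range hnd _).mp hk)

theorem isSuppArc_ψ (a : T.A) : T'.IsSuppArc (D.ψ a) :=
  ⟨D.ψ_ne_nil a, D.isChain_ψ a, (D.keep_iff_mem_range hnd _).mpr (D.startV_ψ a ▸ ⟨_, rfl⟩),
    (D.keep_iff_mem_range hnd _).mpr (D.endV_ψ a ▸ ⟨_, rfl⟩), D.interiorSuppressed_ψ hnd a⟩

theorem exists_eq_ψ_of_isSuppArc {l : List T'.A} (hl : T'.IsSuppArc l) : ∃ a, l = D.ψ a := by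
  obtain ⟨hne, hch, hks, hke, hint⟩ := hl
  obtain ⟨c, t, rfl⟩ := List.exists_cons_of_ne_nil hne
  obtain ⟨a, ha, -⟩ := D.existsUnique_mem_ψ c
  rcases D.head?_eq_or_tl_not_mem_range ha with hhead | hnot
  · have hout (w : T'.V) (hw : ¬ T'.Keep w) (d e : T'.A) : T'.tl d = w → T'.tl e = w → d = e :=
      eq_of_tl_eq_of_outdeg_eq_one
        (D.of_not_mem_range w fun hr => hw ((D.keep_iff_mem_range hnd w).mpr hr)).2.1
    exact ⟨a, eq_of_head?_eq hout hne (D.ψ_ne_nil a) hhead.symm hch (D.isChain_ψ a) hint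
      (D.interiorSuppressed_ψ hnd a) hke (D.isSuppArc_ψ hnd a).2.2.2.1⟩
  · exact absurd ((D.keep_iff_mem_range hnd _).mp hks) hnot

theorem iso_suppress : Iso T T'.suppress := by
  refine ⟨.ofBijective (fun v => ⟨D.φ v, (D.keep_iff_mem_range hnd _).mpr ⟨v, rfl⟩⟩) ⟨?_, ?_⟩,
    .ofBijective (fun a => ⟨D.ψ a, D.isSuppArc_ψ hnd a⟩) ⟨?_, ?_⟩,
    fun a => Subtype.ext (D.startV_ψ a), fun a => Subtype.ext (D.endV_ψ a),
    Subtype.ext D.φ_root, D.lab_φ⟩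
  · exact fun v w h => D.φ_injective (congrArg Subtype.val h)
  · rintro ⟨w, hw⟩
    obtain ⟨v, rfl⟩ := (D.keep_iff_mem_range hnd w).mp hw
    exact ⟨v, rfl⟩
  · exact fun a b h => D.ψ_injective (congrArg Subtype.val h)
  · rintro ⟨l, hl⟩
    obtain ⟨a, rfl⟩ := D.exists_eq_ψ_of_isSuppArc hnd hl
    exact ⟨a, rfl⟩

end Suppress

theorem reaches_φ {u v : T.V} (h : T.Reaches u v) : T'.Reaches (D.φ u) (D.φ v) := by
  induction h with
  | refl => exact .refl
  | tail _ harc ih =>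
    obtain ⟨a, rfl, rfl⟩ := harc
    have h := (D.isChain_ψ a).reaches_endV (D.ψ_ne_nil a)
    rw [D.startV_ψ, D.endV_ψ] at h
    exact ih.trans h

theorem isArborescence (hT : T.IsArborescence) : T'.IsArborescence where
  hd_ne_root a' h :=
    hT.hd_ne_root _ ((D.inArcEquiv T.root).symm ⟨a', h.trans D.φ_root.symm⟩).2
  hd_injective a' b' h := by
    by_cases hw : T'.hd a' ∈ Set.range D.φ
    · obtain ⟨v, hv⟩ := hw
      have : Subsingleton {a // T.hd a = v} :=
        ⟨fun x y => Subtype.ext (hT.hd_injective (x.2.trans y.2.symm))⟩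
      have := (D.inArcEquiv v).subsingleton_congr.mp this
      exact congrArg Subtype.val
        (Subsingleton.elim (⟨a', hv.symm⟩ : {a' // T'.hd a' = D.φ v}) ⟨b', h ▸ hv.symm⟩)
    · exact eq_of_hd_eq_of_indeg_eq_one (D.of_not_mem_range _ hw).1 rfl h.symm
  reaches w := by
    rw [← D.φ_root]
    by_cases hw : w ∈ Set.range D.φ
    · obtain ⟨v, rfl⟩ := hw
      exact D.reaches_φ (hT.reaches v)
    · obtain ⟨a', rfl⟩ := exists_hd_eq_of_indeg_eq_one (D.of_not_mem_range _ hw).1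
      obtain ⟨a, ha, -⟩ := D.existsUnique_mem_ψ a'
      have h := (D.isChain_ψ a).reaches_hd a' ha
      rw [D.startV_ψ] at h
      exact (D.reaches_φ (hT.reaches _)).trans h

theorem exists_lab_of_isLeaf (hT : ∀ v, T.IsLeaf v → ∃ x, T.lab v = some x) (w : T'.V)
    (hw : T'.IsLeaf w) : ∃ x, T'.lab w = some x := by
  by_cases hr : w ∈ Set.range D.φ
  · obtain ⟨v, rfl⟩ := hr
    rw [D.lab_φ]
    exact hT v ((D.outdeg_φ v).symm.trans hw)
  · exact absurd ((D.of_not_mem_range w hr).2.1.symm.trans hw) one_ne_zero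

end Subdivision

end Dgr

/-- For any MUL-tree `T` on `X` for which the folding `F(T)`
is defined, the unfolding `U(F(T))` is isomorphic to `T` as MUL-trees on `X`. -/
theorem unfold_fold (X : Type) (T N : Dgr X) (hT : T.IsMulTree)
    (hF : Dgr.IsFoldingOf N T) : Dgr.Iso N.U T := by
  obtain ⟨hN, T', hsub, f, hf, -⟩ := hF
  obtain ⟨⟨-, _, -, hNroot, -⟩, -, -, hNleaf, -⟩ := hN
  obtain ⟨-, -, hTleaf, -⟩ := hT.1
  obtain ⟨D⟩ := hsub.nonempty_subdivision
  have hT' : T'.IsArborescence := D.isArborescence hT.1.isArborescence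
  have hr : f.IsRooted := f.isRooted_of_surjective hT' hNroot hf.1
  have hlift : f.HasUniqueLifting := hf.2.2
  have hlab : ∀ v, N.lab (f.fV v) = T'.lab v :=
    f.lab_eq (D.exists_lab_of_isLeaf fun v => (hTleaf v).mpr) fun u => (hNleaf u).mp
  have hUN : Dgr.Iso N.U T'.suppress :=
    ((hlift.iso_ustar hr hlab).symm.trans hT'.iso_ustar).suppress
  exact hUN.trans (D.iso_suppress hT.2).symm
end

section
/- Every binary compressed tree-sibling phylogenetic network is stable, i.e., F(U(N)) is isomorphic to N. -/
/-!
Take as subdivision of `U(N)` the path tree `U*(N)` itself (compressedness makes every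
suppressed vertex of `U*(N)` sit between two kept ones), and as folding map the end-point map
`U*(N) → N`. Root-paths with the same end have isomorphic pendant subtrees. Conversely, if the
pendant subtrees at paths ending at `v` and `w` are isomorphic, induction from the leaves shows
that `v` and `w` carry the same label and have the same children, and in a binary tree-sibling
network this forces `v = w`.
-/

namespace Dgr

variable {X : Type}

section Iso

theorem Iso.refl (G : Dgr X) : Iso G G :=
  ⟨Equiv.refl _, Equiv.refl _, fun _ => rfl, fun _ => rfl, rfl, fun _ => rfl⟩

theorem Iso.lab_root {G H : Dgr X} (h : Iso G H) : H.lab H.root = G.lab G.root := by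
  obtain ⟨φ, -, -, -, hr, hl⟩ := h
  rw [← hr, hl]

theorem reaches_map {G H : Dgr X} (φ : G.V → H.V) (ψ : G.A → H.A)
    (htl : ∀ a, H.tl (ψ a) = φ (G.tl a)) (hhd : ∀ a, H.hd (ψ a) = φ (G.hd a))
    {u v : G.V} (h : G.Reaches u v) : H.Reaches (φ u) (φ v) := by
  induction h with
  | refl => exact .refl
  | tail _ step ih =>
    obtain ⟨c, rfl, rfl⟩ := step
    exact ih.tail ⟨ψ c, htl c, hhd c⟩

theorem iso_pendant_of_equiv {G H : Dgr X} (φ : G.V ≃ H.V) (ψ : G.A ≃ H.A)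
    (htl : ∀ a, H.tl (ψ a) = φ (G.tl a)) (hhd : ∀ a, H.hd (ψ a) = φ (G.hd a))
    (hlab : ∀ v, H.lab (φ v) = G.lab v) (u : G.V) :
    Iso (G.pendant u) (H.pendant (φ u)) := by
  have htl' : ∀ a, G.tl (ψ.symm a) = φ.symm (H.tl a) := by
    intro a; rw [φ.eq_symm_apply, ← htl, Equiv.apply_symm_apply]
  have hhd' : ∀ a, G.hd (ψ.symm a) = φ.symm (H.hd a) := by
    intro a; rw [φ.eq_symm_apply, ← hhd, Equiv.apply_symm_apply]
  have hrev : ∀ {a b : H.V}, H.Reaches a b → G.Reaches (φ.symm a) (φ.symm b) :=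
    reaches_map φ.symm ψ.symm htl' hhd'
  refine ⟨⟨fun y => ⟨φ y.1, reaches_map φ ψ htl hhd y.2⟩,
      fun z => ⟨φ.symm z.1, by simpa using hrev z.2⟩,
      fun y => Subtype.ext (by simp), fun z => Subtype.ext (by simp)⟩,
    ⟨fun A => ⟨ψ A.1, by rw [htl]; exact reaches_map φ ψ htl hhd A.2⟩,
      fun B => ⟨ψ.symm B.1, by rw [htl']; simpa using hrev B.2⟩,
      fun A => Subtype.ext (by simp), fun B => Subtype.ext (by simp)⟩,
    fun A => Subtype.ext (htl A.1), fun A => Subtype.ext (hhd A.1),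
    Subtype.ext rfl, fun y => hlab y.1⟩

theorem reaches_pendant_iff (G : Dgr X) (v : G.V) (x y : (G.pendant v).V) :
    (G.pendant v).Reaches x y ↔ G.Reaches x.1 y.1 := by
  refine ⟨reaches_map (G := G.pendant v) Subtype.val Subtype.val (fun _ => rfl) (fun _ => rfl),
    fun h => ?_⟩
  suffices ∀ z (hz : G.Reaches x.1 z), (G.pendant v).Reaches x ⟨z, x.2.trans hz⟩ from
    this y.1 h
  intro z hz
  induction hz with
  | refl => exact .refl
  | @tail b c hb step ih =>
    obtain ⟨a, ha, rfl⟩ := step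
    exact ih.tail ⟨⟨a, ha ▸ x.2.trans hb⟩, Subtype.ext ha, rfl⟩

theorem iso_pendant_pendant (G : Dgr X) (v : G.V) (x : (G.pendant v).V) :
    Iso ((G.pendant v).pendant x) (G.pendant x.1) :=
  ⟨⟨fun y => ⟨y.1.1, (reaches_pendant_iff G v x y.1).mp y.2⟩,
      fun z => ⟨⟨z.1, x.2.trans z.2⟩, (reaches_pendant_iff G v x _).mpr z.2⟩,
      fun _ => rfl, fun _ => rfl⟩,
    ⟨fun A => ⟨A.1.1, (reaches_pendant_iff G v x _).mp A.2⟩,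
      fun a => ⟨⟨a.1, x.2.trans a.2⟩, (reaches_pendant_iff G v x _).mpr a.2⟩,
      fun _ => rfl, fun _ => rfl⟩,
    fun _ => rfl, fun _ => rfl, rfl, fun _ => rfl⟩

end Iso

section PathTree

inductive PathFrom (G : Dgr X) (v : G.V) : G.V → Type
  | nil : PathFrom G v v
  | cons {w : G.V} (s : PathFrom G v w) (a : G.A) (h : G.tl a = w) : PathFrom G v (G.hd a)

def PathFrom.length {G : Dgr X} {v : G.V} : ∀ {w : G.V}, PathFrom G v w → ℕ
  | _, .nil => 0
  | _, .cons s _ _ => s.length + 1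

def RPath.length {G : Dgr X} : ∀ {v : G.V}, RPath G v → ℕ
  | _, .nil => 0
  | _, .cons p _ _ => p.length + 1

-- Reads off the last arc of a root-path, giving injectivity of `RPath.cons` across the index.
def RPath.uncons {G : Dgr X} : (Σ v : G.V, RPath G v) → Option ((Σ v : G.V, RPath G v) × G.A)
  | ⟨_, .nil⟩ => none
  | ⟨_, .cons (v := u) p a _⟩ => some (⟨u, p⟩, a)

def graft (G : Dgr X) {v : G.V} (p : RPath G v) : ∀ {w : G.V}, PathFrom G v w → RPath G w
  | _, .nil => p
  | _, .cons s a h => .cons (G.graft p s) a h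

def pathTree (G : Dgr X) (v : G.V) : Dgr X where
  V := Σ w : G.V, PathFrom G v w
  A := Σ w : G.V, PathFrom G v w × {a : G.A // G.tl a = w}
  tl x := ⟨x.1, x.2.1⟩
  hd x := ⟨G.hd x.2.2.1, .cons x.2.1 x.2.2.1 x.2.2.2⟩
  root := ⟨v, .nil⟩
  lab x := G.lab x.1

variable {G : Dgr X} {v : G.V}

theorem length_graft (p : RPath G v) :
    ∀ {w} (s : PathFrom G v w), (G.graft p s).length = p.length + s.length
  | _, .nil => rfl
  | _, .cons s _ _ => congrArg (· + 1) (length_graft p s)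

theorem graft_inj (p : RPath G v) {w w' : G.V} (s : PathFrom G v w) (s' : PathFrom G v w')
    (h : (⟨w, G.graft p s⟩ : Σ u, RPath G u) = ⟨w', G.graft p s'⟩) :
    (⟨w, s⟩ : Σ u, PathFrom G v u) = ⟨w', s'⟩ := by
  have hlen := congrArg (fun x : Σ u, RPath G u => x.2.length) h
  simp only [length_graft] at hlen
  induction s generalizing w' with
  | nil => cases s' with
    | nil => rfl
    | cons s' a ha => simp [PathFrom.length] at hlen
  | cons s a ha ih => cases s' with
    | nil => simp [PathFrom.length] at hlen
    | cons s' a' ha' =>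
      have hu := congrArg RPath.uncons h
      simp only [graft, RPath.uncons, Option.some.injEq, Prod.mk.injEq] at hu
      obtain ⟨hu, rfl⟩ := hu
      obtain ⟨rfl, hs⟩ := Sigma.mk.inj_iff.mp (ih s' hu (by simpa [PathFrom.length] using hlen))
      cases hs
      rfl

theorem graft_reaches (p : RPath G v) :
    ∀ {w} (s : PathFrom G v w), G.Ustar.Reaches ⟨v, p⟩ ⟨w, G.graft p s⟩
  | _, .nil => .refl
  | _, .cons s a h => (graft_reaches p s).tail ⟨⟨_, (G.graft p s, ⟨a, h⟩)⟩, rfl, rfl⟩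

theorem exists_graft_eq (p : RPath G v) {x : Σ u, RPath G u} (h : G.Ustar.Reaches ⟨v, p⟩ x) :
    ∃ z : Σ w, PathFrom G v w, (⟨z.1, G.graft p z.2⟩ : Σ u, RPath G u) = x := by
  induction h with
  | refl => exact ⟨⟨v, .nil⟩, rfl⟩
  | tail _ step ih =>
    obtain ⟨⟨w, s⟩, rfl⟩ := ih
    obtain ⟨⟨u, r, a, ha⟩, hA, rfl⟩ := step
    change (⟨u, r⟩ : Σ u, RPath G u) = ⟨w, G.graft p s⟩ at hA
    obtain ⟨rfl, hr⟩ := Sigma.mk.inj_iff.mp hA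
    subst hr
    exact ⟨⟨_, .cons s a ha⟩, rfl⟩

theorem iso_pathTree_ustar_pendant (p : RPath G v) :
    Iso (G.pathTree v) (G.Ustar.pendant ⟨v, p⟩) := by
  let φ : (G.pathTree v).V ≃ (G.Ustar.pendant ⟨v, p⟩).V :=
    Equiv.ofBijective (fun z => ⟨⟨z.1, G.graft p z.2⟩, graft_reaches p z.2⟩)
      ⟨fun z z' h => graft_inj p z.2 z'.2 (congrArg Subtype.val h), fun x => by
        obtain ⟨z, hz⟩ := exists_graft_eq p x.2
        exact ⟨z, Subtype.ext hz⟩⟩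
  let ψ : (G.pathTree v).A ≃ (G.Ustar.pendant ⟨v, p⟩).A :=
    Equiv.ofBijective (fun z => ⟨⟨z.1, (G.graft p z.2.1, z.2.2)⟩, graft_reaches p z.2.1⟩)
      ⟨by
        rintro ⟨w, s, a⟩ ⟨w', s', a'⟩ h
        obtain ⟨rfl, hs⟩ := Sigma.mk.inj_iff.mp
          (graft_inj p s s' (congrArg (fun A : (G.Ustar.pendant ⟨v, p⟩).A => G.Ustar.tl A.1) h))
        cases hs
        cases Subtype.ext (congrArg (fun A => A.1.2.2.1) h : a.1 = a'.1)
        rfl, by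
        rintro ⟨⟨u, r, a, ha⟩, hA⟩
        obtain ⟨⟨w, s⟩, hz⟩ := exists_graft_eq p hA
        obtain ⟨rfl, hr⟩ := Sigma.mk.inj_iff.mp hz
        cases hr
        exact ⟨⟨w, s, ⟨a, ha⟩⟩, rfl⟩⟩
  exact ⟨φ, ψ, fun _ => rfl, fun _ => rfl, rfl, fun _ => rfl⟩

theorem iso_ustar_pendant_of_same_end (p q : RPath G v) :
    Iso (G.Ustar.pendant ⟨v, p⟩) (G.Ustar.pendant ⟨v, q⟩) :=
  (iso_pathTree_ustar_pendant p).symm.trans (iso_pathTree_ustar_pendant q)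

end PathTree

section Ustar

variable {G : Dgr X}

theorem ustar_arc_eq_of_tl_eq {w : G.V} {q : RPath G w} {B : G.Ustar.A}
    (h : G.Ustar.tl B = ⟨w, q⟩) :
    ∃ (b : G.A) (hb : G.tl b = w), B = ⟨w, (q, ⟨b, hb⟩)⟩ := by
  obtain ⟨u, r, b, hb⟩ := B
  change (⟨u, r⟩ : Σ u, RPath G u) = ⟨w, q⟩ at h
  obtain ⟨rfl, hr⟩ := Sigma.mk.inj_iff.mp h
  subst hr
  exact ⟨b, hb, rfl⟩

theorem ustar_outdeg (x : G.Ustar.V) : G.Ustar.outdeg x = G.outdeg x.1 := by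
  refine (Nat.card_congr (Equiv.ofBijective
    (fun a : {a : G.A // G.tl a = x.1} => (⟨⟨x.1, (x.2, a)⟩, rfl⟩ :
      {A : G.Ustar.A // G.Ustar.tl A = x})) ⟨fun a a' h => ?_, fun A => ?_⟩)).symm
  · exact Subtype.ext (congrArg (fun A : {A : G.Ustar.A // _} => A.1.2.2.1) h)
  · obtain ⟨b, hb, e⟩ := ustar_arc_eq_of_tl_eq A.2
    exact ⟨⟨b, hb⟩, Subtype.ext e.symm⟩

theorem exists_rpath {u : G.V} (h : G.Reaches G.root u) : Nonempty (RPath G u) := by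
  induction h with
  | refl => exact ⟨.nil⟩
  | tail _ step ih =>
    obtain ⟨a, ha, rfl⟩ := step
    obtain ⟨p⟩ := ih
    exact ⟨.cons p a ha⟩

theorem fstar_isFolding (hreach : ∀ u, G.Reaches G.root u) : (fstar G).IsFolding := by
  refine ⟨fun u => ?_, fun a => ?_, fun a x hx => ?_⟩
  · obtain ⟨p⟩ := exists_rpath (hreach u)
    exact ⟨⟨u, p⟩, rfl⟩
  · obtain ⟨p⟩ := exists_rpath (hreach (G.tl a))
    exact ⟨⟨G.tl a, (p, ⟨a, rfl⟩)⟩, rfl⟩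
  · obtain ⟨u, p⟩ := x
    refine ⟨⟨u, (p, ⟨a, hx.symm⟩)⟩, ⟨rfl, rfl⟩, ?_⟩
    rintro B ⟨hB, rfl⟩
    obtain ⟨b, hb, rfl⟩ := ustar_arc_eq_of_tl_eq hB
    rfl

theorem exists_iso_child_pendant {v w : G.V} {p : RPath G v} {q : RPath G w}
    (h : Iso (G.Ustar.pendant ⟨v, p⟩) (G.Ustar.pendant ⟨w, q⟩)) (a : G.A)
    (ha : G.tl a = v) :
    ∃ (b : G.A) (hb : G.tl b = w),
      Iso (G.Ustar.pendant ⟨G.hd a, .cons p a ha⟩)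
        (G.Ustar.pendant ⟨G.hd b, .cons q b hb⟩) := by
  obtain ⟨φ, ψ, htl, hhd, hroot, hlab⟩ := h
  let A : (G.Ustar.pendant ⟨v, p⟩).A := ⟨⟨v, (p, ⟨a, ha⟩)⟩, .refl⟩
  obtain ⟨b, hb, hψA⟩ := ustar_arc_eq_of_tl_eq (congrArg Subtype.val ((htl A).trans hroot))
  have hφ : (φ ((G.Ustar.pendant ⟨v, p⟩).hd A)).1 = ⟨G.hd b, .cons q b hb⟩ := by
    rw [← hhd A]
    exact congrArg G.Ustar.hd hψA
  have := (iso_pendant_pendant _ _ _).symm.trans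
    ((iso_pendant_of_equiv φ ψ htl hhd hlab ((G.Ustar.pendant ⟨v, p⟩).hd A)).trans
      (iso_pendant_pendant _ _ _))
  rw [hφ] at this
  exact ⟨b, hb, this⟩

end Ustar

section Network

variable {N : Dgr X}

theorem IsXNetwork.isRetVertex_of_outdeg_eq_one (hN : N.IsXNetwork) {v : N.V}
    (h : N.outdeg v = 1) : N.IsRetVertex v := by
  obtain ⟨-, hroot, hkind, -⟩ := hN
  have hv : v ≠ N.root := by rintro rfl; omega
  rcases hkind v hv with ⟨-, h0 | h2⟩ | hret
  · omega
  · omega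
  · exact hret

theorem IsXNetwork.isRetVertex_of_two_le_indeg (hN : N.IsXNetwork) {c : N.V}
    (h : 2 ≤ N.indeg c) : c ≠ N.root ∧ N.IsRetVertex c := by
  obtain ⟨⟨-, -, -, hroot, -⟩, -, hkind, -⟩ := hN
  have hc : c ≠ N.root := by rintro rfl; omega
  rcases hkind c hc with ⟨h1, -⟩ | hret
  · omega
  · exact ⟨hc, hret⟩

theorem two_le_indeg_of_mem_children [Finite N.A] {v w c : N.V} (hvw : v ≠ w)
    (hv : c ∈ N.children v) (hw : c ∈ N.children w) : 2 ≤ N.indeg c := by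
  obtain ⟨a, rfl, rfl⟩ := hv
  obtain ⟨b, rfl, hb⟩ := hw
  exact Finite.one_lt_card_iff_nontrivial.mpr
    ⟨⟨a, rfl⟩, ⟨b, hb⟩, fun h => hvw (congrArg (N.tl ∘ Subtype.val) h)⟩

theorem eq_or_eq_of_indeg_eq_two {c : N.V} (h : N.indeg c = 2) {a b d : N.A} (ha : N.hd a = c)
    (hb : N.hd b = c) (hab : a ≠ b) (hd : N.hd d = c) : d = a ∨ d = b := by
  obtain ⟨y, -, hy⟩ := (Nat.card_eq_two_iff' ⟨a, ha⟩).mp h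
  by_cases hda : d = a
  · exact .inl hda
  · have hb' := hy ⟨b, hb⟩ fun h => hab (congrArg Subtype.val h).symm
    have hd' := hy ⟨d, hd⟩ fun h => hda (congrArg Subtype.val h)
    exact .inr (congrArg Subtype.val (hd'.trans hb'.symm))

/-- If `v ≠ w`, every common child is a reticulation whose two parents are `v` and `w`, so its
tree sibling is again a common child, and common children are not tree vertices. -/
theorem eq_of_lab_eq_of_children_eq (hN : N.IsXNetwork) (hb : N.BinaryNet)
    (hts : N.TreeSibling) {v w : N.V} (hlab : N.lab v = N.lab w)
    (hch : N.children v = N.children w) : v = w := by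
  have : Finite N.A := hN.1.2.1
  by_contra hvw
  have hshared (c : N.V) (hc : c ∈ N.children v) : 2 ≤ N.indeg c :=
    two_le_indeg_of_mem_children hvw hc (hch ▸ hc)
  by_cases hleaf : N.IsLeaf v
  · obtain ⟨x, hx⟩ := (hN.2.2.2.1 v).mpr hleaf
    exact hvw ((hN.2.2.2.2 x).unique hx (hlab ▸ hx))
  obtain ⟨⟨a, ha⟩⟩ : Nonempty {a : N.A // N.tl a = v} :=
    (Nat.card_pos_iff.mp (Nat.pos_of_ne_zero hleaf)).1
  have hav : N.hd a ∈ N.children v := ⟨a, ha, rfl⟩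
  obtain ⟨b, hbw, hbc⟩ : N.hd a ∈ N.children w := hch ▸ hav
  obtain ⟨hroot, hret⟩ := hN.isRetVertex_of_two_le_indeg (hshared _ hav)
  obtain ⟨s, -, hs, d, f, hdf, hd, hf⟩ := hts _ hret
  have hsv : s ∈ N.children v := by
    have hab : a ≠ b := fun h => hvw (by rw [← ha, ← hbw, h])
    rcases eq_or_eq_of_indeg_eq_two ((hb.2 _ hroot).1 hret) rfl hbc hab hd with rfl | rfl
    · exact ⟨f, hdf ▸ ha, hf⟩
    · exact hch ▸ ⟨f, hdf ▸ hbw, hf⟩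
  have := hshared s hsv
  rw [hs.1] at this
  omega

theorem wellFounded_flip_arcRel [Finite N.V] (h : N.Acyclic) : WellFounded (flip N.arcRel) := by
  have : IsTrans N.V (flip (Relation.TransGen N.arcRel)) :=
    ⟨fun _ _ _ h₁ h₂ => h₂.trans h₁⟩
  have : Std.Irrefl (flip (Relation.TransGen N.arcRel)) := ⟨h⟩
  exact Subrelation.wf (r := flip (Relation.TransGen N.arcRel)) (fun h => .single h)
    (Finite.wellFounded_of_trans_of_irrefl _)

theorem eq_of_iso_ustar_pendant (hN : N.IsXNetwork) (hb : N.BinaryNet) (hts : N.TreeSibling)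
    {v w : N.V} (p : RPath N v) (q : RPath N w)
    (h : Iso (N.Ustar.pendant ⟨v, p⟩) (N.Ustar.pendant ⟨w, q⟩)) : v = w := by
  have : Finite N.V := hN.1.1
  induction v using (wellFounded_flip_arcRel hN.1.2.2.1).induction generalizing w with
  | _ v ih =>
  refine eq_of_lab_eq_of_children_eq hN hb hts h.lab_root.symm (Set.ext fun c => ⟨?_, ?_⟩)
  · rintro ⟨a, ha, rfl⟩
    obtain ⟨b, hbw, hab⟩ := exists_iso_child_pendant h a ha
    exact ⟨b, hbw, (ih _ ⟨a, ha, rfl⟩ _ _ hab).symm⟩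
  · rintro ⟨b, hbw, rfl⟩
    obtain ⟨a, ha, hba⟩ := exists_iso_child_pendant h.symm b hbw
    exact ⟨a, ha, ih _ ⟨a, ha, rfl⟩ _ _ hba.symm⟩

end Network

section Suppression

variable {G : Dgr X}

theorem not_keep_iff {v : G.V} :
    ¬ G.Keep v ↔ v ≠ G.root ∧ G.indeg v = 1 ∧ G.outdeg v = 1 := by
  simp only [Keep, not_or, not_not]

theorem isSuppArc_singleton {A : G.A} (h₁ : G.Keep (G.tl A)) (h₂ : G.Keep (G.hd A)) :
    G.IsSuppArc [A] := by
  refine ⟨List.cons_ne_nil _ _, fun p a b s hps => ?_, h₁, h₂, fun p a s hps hs => ?_⟩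
  · have := congrArg List.length hps
    simp only [List.length_append, List.length_cons, List.length_nil] at this
    omega
  · have := congrArg List.length hps
    simp only [List.length_append, List.length_cons, List.length_nil] at this
    exact absurd (List.eq_nil_of_length_eq_zero (by omega)) hs

theorem isSuppArc_pair {A B : G.A} (hAB : G.hd A = G.tl B) (h₁ : G.Keep (G.tl A))
    (h₂ : ¬ G.Keep (G.hd A)) (h₃ : G.Keep (G.hd B)) : G.IsSuppArc [A, B] := by
  refine ⟨List.cons_ne_nil _ _, fun p a b s hps => ?_, h₁, h₃, fun p a s hps hs => ?_⟩
  · match p, hps with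
    | [], hps =>
      simp only [List.nil_append, List.cons.injEq] at hps
      obtain ⟨rfl, rfl, -⟩ := hps
      exact hAB
    | _ :: _, hps =>
      have := congrArg List.length hps
      simp only [List.length_append, List.length_cons, List.length_nil] at this
      omega
  · match p, hps with
    | [], hps =>
      simp only [List.nil_append, List.cons.injEq] at hps
      obtain ⟨rfl, -⟩ := hps
      exact h₂
    | [_], hps =>
      simp only [List.cons_append, List.nil_append, List.cons.injEq] at hps
      exact absurd hps.2.2.symm hs
    | _ :: _ :: _, hps =>
      have := congrArg List.length hps
      simp only [List.length_append, List.length_cons, List.length_nil] at this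
      omega

theorem isSuppArc_cases (hkeep : ∀ a : G.A, G.Keep (G.tl a) ∨ G.Keep (G.hd a)) {l : List G.A}
    (hl : G.IsSuppArc l) :
    (∃ A, l = [A] ∧ G.Keep (G.tl A) ∧ G.Keep (G.hd A)) ∨
    (∃ A B, l = [A, B] ∧ G.hd A = G.tl B ∧ G.Keep (G.tl A) ∧ ¬ G.Keep (G.hd A) ∧
      G.Keep (G.hd B)) := by
  obtain ⟨hne, hchain, hstart, hend, hint⟩ := hl
  match l, hne with
  | [A], _ => exact .inl ⟨A, rfl, hstart, hend⟩
  | A :: B :: t, _ =>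
    have hAB : G.hd A = G.tl B := hchain [] A B t rfl
    have hA : ¬ G.Keep (G.hd A) := hint [] A (B :: t) rfl (List.cons_ne_nil _ _)
    have hB : G.Keep (G.hd B) := (hkeep B).resolve_left (hAB ▸ hA)
    match t with
    | [] => exact .inr ⟨A, B, rfl, hAB, hstart, hA, hB⟩
    | C :: t' => exact absurd hB (hint [A] B (C :: t') rfl (List.cons_ne_nil _ _))

theorem existsUnique_isSuppArc_mem (hkeep : ∀ a : G.A, G.Keep (G.tl a) ∨ G.Keep (G.hd a))
    (A₀ : G.A) : ∃! l, G.IsSuppArc l ∧ A₀ ∈ l := by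
  have mem_pair {A B : G.A} (h : A₀ ∈ [A, B]) : A₀ = A ∨ A₀ = B := by
    simpa only [List.mem_cons, List.mem_singleton, List.not_mem_nil, or_false] using h
  by_cases ht : G.Keep (G.tl A₀)
  · by_cases hh : G.Keep (G.hd A₀)
    · refine ⟨[A₀], ⟨isSuppArc_singleton ht hh, List.mem_singleton_self _⟩, ?_⟩
      rintro l ⟨hl, hmem⟩
      rcases isSuppArc_cases hkeep hl with ⟨A, rfl, -⟩ | ⟨A, B, rfl, hAB, -, hA, -⟩
      · rw [List.mem_singleton.mp hmem]
      · rcases mem_pair hmem with rfl | rfl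
        · exact absurd hh hA
        · exact absurd (hAB ▸ ht) hA
    · obtain ⟨hsub, ⟨B₀, hB₀⟩⟩ :=
        Nat.card_eq_one_iff_unique.mp (not_keep_iff.mp hh).2.2
      refine ⟨[A₀, B₀], ⟨isSuppArc_pair hB₀.symm ht hh
        ((hkeep B₀).resolve_left (hB₀ ▸ hh)), List.mem_cons_self⟩, ?_⟩
      rintro l ⟨hl, hmem⟩
      rcases isSuppArc_cases hkeep hl with ⟨A, rfl, -, hA⟩ | ⟨A, B, rfl, hAB, -, hA, -⟩
      · exact absurd (List.mem_singleton.mp hmem ▸ hA) hh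
      · rcases mem_pair hmem with rfl | rfl
        · cases congrArg Subtype.val (hsub.elim ⟨B, hAB.symm⟩ ⟨B₀, hB₀⟩)
          rfl
        · exact absurd (hAB ▸ ht) hA
  · obtain ⟨hsub, ⟨C₀, hC₀⟩⟩ := Nat.card_eq_one_iff_unique.mp (not_keep_iff.mp ht).2.1
    refine ⟨[C₀, A₀], ⟨isSuppArc_pair hC₀ ((hkeep C₀).resolve_right (hC₀ ▸ ht))
      (hC₀ ▸ ht) ((hkeep A₀).resolve_left ht),
      List.mem_cons_of_mem _ (List.mem_singleton_self _)⟩, ?_⟩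
    rintro l ⟨hl, hmem⟩
    rcases isSuppArc_cases hkeep hl with ⟨A, rfl, hA, -⟩ | ⟨A, B, rfl, hAB, hA, -, -⟩
    · exact absurd (List.mem_singleton.mp hmem ▸ hA) ht
    · rcases mem_pair hmem with rfl | rfl
      · exact absurd hA ht
      · cases congrArg Subtype.val (hsub.elim ⟨A, hAB⟩ ⟨C₀, hC₀⟩)
        rfl

theorem isSubdivisionOf_suppress (hkeep : ∀ a : G.A, G.Keep (G.tl a) ∨ G.Keep (G.hd a))
    (hlab : ∀ v, ¬ G.Keep v → G.lab v = none) :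
    IsSubdivisionOf G G.suppress := by
  refine ⟨Subtype.val, Subtype.val, Subtype.val_injective, rfl, fun _ => rfl,
    fun l => ⟨l.2.1, l.2.2.1, rfl, rfl, ?_⟩, fun v hv => ?_, fun A₀ => ?_⟩
  · rintro _ ⟨p, a, s, hsplit, hs, rfl⟩ ⟨w, hw⟩
    exact l.2.2.2.2.2 p a s hsplit hs (hw ▸ w.2)
  · have hnk : ¬ G.Keep v := fun hk => hv ⟨⟨v, hk⟩, rfl⟩
    obtain ⟨-, hin, hout⟩ := not_keep_iff.mp hnk
    exact ⟨hin, hout, hlab v hnk⟩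
  · obtain ⟨l, ⟨hl, hmem⟩, huniq⟩ := existsUnique_isSuppArc_mem hkeep A₀
    exact ⟨⟨l, hl⟩, hmem, fun l' hl' => Subtype.ext (huniq l'.1 ⟨l'.2, hl'⟩)⟩

end Suppression

theorem ustar_keep_tl_or_keep_hd {N : Dgr X} (hN : N.IsXNetwork) (hc : N.Compressed)
    (A : N.Ustar.A) : N.Ustar.Keep (N.Ustar.tl A) ∨ N.Ustar.Keep (N.Ustar.hd A) := by
  by_contra! h
  obtain ⟨htl, hhd⟩ := h
  obtain ⟨u, r, a, rfl⟩ := A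
  have hret := hN.isRetVertex_of_outdeg_eq_one
    ((ustar_outdeg _).symm.trans (not_keep_iff.mp htl).2.2)
  have htree := hc a hret
  have := (ustar_outdeg _).symm.trans (not_keep_iff.mp hhd).2.2
  rcases htree.2 with h | h <;> simp only [Ustar] at this <;> omega

theorem ustar_lab_eq_none_of_not_keep {N : Dgr X} (hN : N.IsXNetwork) (x : N.Ustar.V)
    (hx : ¬ N.Ustar.Keep x) : N.Ustar.lab x = none := by
  have hout : N.outdeg x.1 = 1 := (ustar_outdeg x).symm.trans (not_keep_iff.mp hx).2.2
  refine Option.eq_none_iff_forall_ne_some.mpr fun y hy => ?_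
  have : N.IsLeaf x.1 := (hN.2.2.2.1 x.1).mp ⟨y, hy⟩
  rw [IsLeaf, hout] at this
  exact one_ne_zero this

theorem ustar_isSubdivisionOf_U {N : Dgr X} (hN : N.IsXNetwork) (hc : N.Compressed) :
    IsSubdivisionOf N.Ustar N.U :=
  isSubdivisionOf_suppress (ustar_keep_tl_or_keep_hd hN hc) (ustar_lab_eq_none_of_not_keep hN)

end Dgr

/-- Every binary compressed tree-sibling phylogenetic network
is stable, i.e. `F(U(N))` is isomorphic to `N`. -/
theorem tree_sibling_stable (X : Type) (N : Dgr X) (hN : N.IsPhyloNetwork)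
    (hb : N.BinaryNet) (hc : N.Compressed) (hts : N.TreeSibling) :
    N.Stable := by
  obtain ⟨hX, -⟩ := hN
  refine ⟨N, ⟨hX, N.Ustar, Dgr.ustar_isSubdivisionOf_U hX hc, N.fstar,
    Dgr.fstar_isFolding hX.1.2.2.2.2, ?_⟩, Dgr.Iso.refl N⟩
  rintro ⟨v, p⟩ ⟨w, q⟩
  refine ⟨fun h => ?_, Dgr.eq_of_iso_ustar_pendant hX hb hts p q⟩
  obtain rfl : v = w := h
  exact Dgr.iso_ustar_pendant_of_same_end p q
end
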